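/- arXiv:1912.07658 — 2 statements merged into one kernel-verified Lean document; each statement's English description precedes it below -/
import Mathlib

section
/- Let N ≥ 3 be an integer, W the ground state on ℝ^N, and ℓ ∈ ℝ^N with |ℓ| < 1. Then the 𝓗 = Ḣ¹ × L² norm of the initial data of the traveling wave satisfies ‖(W_ℓ(0,·), ∂_t W_ℓ(0,·))‖²_𝓗 = ((N + (2-N)|ℓ|²)/(N√(1-|ℓ|²))) ‖W‖²_{Ḣ¹}. In particular, this quantity tends to +∞ as |ℓ| → 1. -/
open MeasureTheory Filter
open scoped RealInnerProductSpace Topology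

/-- The ground state `W(x) = (1 + |x|²/(N(N-2)))^{1-N/2}` on `ℝ^N`. -/
noncomputable def groundStateW (N : ℕ) (x : EuclideanSpace ℝ (Fin N)) : ℝ :=
  (1 + ‖x‖ ^ 2 / (N * (N - 2))) ^ ((1 : ℝ) - N / 2)

/-- The traveling wave `W_ℓ`, i.e. the Lorentz transform with velocity `ℓ` of the
stationary solution `W` (for the stationary `W`, only the spatial part of the
Lorentz change of variables matters). -/
noncomputable def travelingW (N : ℕ) (ℓ : EuclideanSpace ℝ (Fin N)) (t : ℝ)
    (x : EuclideanSpace ℝ (Fin N)) : ℝ :=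
  groundStateW N
    (((-t / Real.sqrt (1 - ‖ℓ‖ ^ 2)
        + 1 / ‖ℓ‖ ^ 2 * (1 / Real.sqrt (1 - ‖ℓ‖ ^ 2) - 1) * ⟪ℓ, x⟫) • ℓ) + x)

/-- The squared `𝓗 = Ḣ¹ × L²` norm of the initial data `(W_ℓ(0), ∂_t W_ℓ(0))`. -/
noncomputable def travelingWHnormSq (N : ℕ) (ℓ : EuclideanSpace ℝ (Fin N)) : ℝ :=
  ∫ x : EuclideanSpace ℝ (Fin N),
    (‖fderiv ℝ (travelingW N ℓ 0) x‖ ^ 2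
      + (deriv (fun t => travelingW N ℓ t x) 0) ^ 2)

/-!
Let `B` be the spatial part of the Lorentz boost of velocity `ℓ` and `γ = (1 - |ℓ|²)^{-1/2}`.
Then `W_ℓ(t, x) = W(Bx - tγℓ)` and `∇W(y) = a(|y|) y`, so both `∇W_ℓ(0)` and `∂_t W_ℓ(0)` are
expressed through `a(Bx)`. Substituting `y = Bx` (Jacobian `det B = γ`) and using
`|By|² = |y|² + γ²⟨ℓ, y⟩²`, the energy becomes `γ⁻¹ ∫ a² (|y|² + 2γ²⟨ℓ, y⟩²)`. As `a` is radial,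
`∫ a² ⟨ℓ, y⟩² = |ℓ|²/N ∫ a² |y|²` (all directions are exchanged by reflections, and the squares of
the coordinates in an orthonormal basis sum to `|y|²`), which produces the factor
`γ⁻¹ (1 + 2γ²|ℓ|²/N) = (N + (2 - N)|ℓ|²)/(N √(1 - |ℓ|²))`.
-/

open Module

section ChangeOfVariables
variable {E G : Type*} [NormedAddCommGroup E] [NormedSpace ℝ E] [FiniteDimensional ℝ E]
  [MeasurableSpace E] [BorelSpace E] [NormedAddCommGroup G] [NormedSpace ℝ G]

theorem integral_comp_continuousLinearMap_of_det_ne_zero (μ : Measure E) [μ.IsAddHaarMeasure]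
    {L : E →L[ℝ] E} (hL : L.det ≠ 0) (g : E → G) :
    ∫ x, g (L x) ∂μ = |L.det|⁻¹ • ∫ y, g y ∂μ := by
  have hinj : Function.Injective (L : E →ₗ[ℝ] E) :=
    ((Module.End.isUnit_iff _).1 ((LinearMap.isUnit_iff_isUnit_det _).2 hL.isUnit)).1
  have hemb : MeasurableEmbedding (L : E →ₗ[ℝ] E) :=
    (LinearMap.isClosedEmbedding_of_injective (LinearMap.ker_eq_bot.2 hinj)).measurableEmbedding
  change ∫ x, g ((L : E →ₗ[ℝ] E) x) ∂μ = _
  rw [← hemb.integral_map, Measure.map_linearMap_addHaar_eq_smul_addHaar μ hL,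
    integral_smul_measure, abs_inv, ENNReal.toReal_ofReal (by positivity)]

end ChangeOfVariables

section Radial
variable {E : Type*} [NormedAddCommGroup E] [InnerProductSpace ℝ E] [FiniteDimensional ℝ E]
  [MeasurableSpace E] [BorelSpace E] {f : E → ℝ}

theorem integral_mul_inner_sq_eq_of_norm_eq (hf : ∀ x y, ‖x‖ = ‖y‖ → f x = f y) {e e' : E}
    (he : ‖e‖ = ‖e'‖) : ∫ y, f y * ⟪e, y⟫ ^ 2 = ∫ y, f y * ⟪e', y⟫ ^ 2 := by
  set R := (ℝ ∙ (e - e'))ᗮ.reflection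
  rw [← integral_comp R]
  congr 1 with y
  rw [hf _ y (R.norm_map y), ← Submodule.reflection_sub he, ← R.inner_map_map,
    Submodule.reflection_reflection]

theorem MeasureTheory.Integrable.mul_inner_sq (hf : AEStronglyMeasurable f)
    (hint : Integrable (fun y => f y * ‖y‖ ^ 2)) (e : E) :
    Integrable (fun y => f y * ⟪e, y⟫ ^ 2) := by
  refine (hint.norm.const_mul (‖e‖ ^ 2)).mono' (hf.mul (by fun_prop)) (ae_of_all _ fun y => ?_)
  have hey : |⟪e, y⟫| ^ 2 ≤ ‖e‖ ^ 2 * ‖y‖ ^ 2 := by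
    rw [← mul_pow]; gcongr; exact abs_real_inner_le_norm e y
  simp only [norm_mul, norm_pow, Real.norm_eq_abs, abs_norm]
  linarith [mul_le_mul_of_nonneg_left hey (abs_nonneg (f y))]

theorem finrank_mul_integral_mul_inner_sq (hf : ∀ x y, ‖x‖ = ‖y‖ → f x = f y)
    (hfm : AEStronglyMeasurable f) (hint : Integrable (fun y => f y * ‖y‖ ^ 2)) (e : E) :
    finrank ℝ E * ∫ y, f y * ⟪e, y⟫ ^ 2 = ‖e‖ ^ 2 * ∫ y, f y * ‖y‖ ^ 2 := by
  let b := stdOrthonormalBasis ℝ E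
  have hb : ∀ i, ∫ y, f y * ⟪e, y⟫ ^ 2 = ‖e‖ ^ 2 * ∫ y, f y * ⟪b i, y⟫ ^ 2 := fun i => by
    rw [integral_mul_inner_sq_eq_of_norm_eq hf (e' := ‖e‖ • b i) (by simp [norm_smul]),
      ← integral_const_mul]
    congr 1 with y
    rw [real_inner_smul_left]; ring
  calc (finrank ℝ E : ℝ) * ∫ y, f y * ⟪e, y⟫ ^ 2
      = ∑ i, ‖e‖ ^ 2 * ∫ y, f y * ⟪b i, y⟫ ^ 2 := by
        rw [Finset.sum_congr rfl fun i _ => (hb i).symm, Finset.sum_const, Finset.card_univ,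
          Fintype.card_fin, nsmul_eq_mul]
    _ = ‖e‖ ^ 2 * ∫ y, f y * ‖y‖ ^ 2 := by
        rw [← Finset.mul_sum, ← integral_finsetSum _ fun i _ => hint.mul_inner_sq hfm (b i)]
        simp_rw [← Finset.mul_sum, b.sum_sq_inner_right]

end Radial

section LorentzBoost
variable {E : Type*} [NormedAddCommGroup E]

noncomputable def lorentzFactor (ℓ : E) : ℝ := 1 / √(1 - ‖ℓ‖ ^ 2)

theorem lorentzFactor_sq {ℓ : E} (hℓ : ‖ℓ‖ < 1) : lorentzFactor ℓ ^ 2 = (1 - ‖ℓ‖ ^ 2)⁻¹ := by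
  rw [lorentzFactor, div_pow, Real.sq_sqrt (by nlinarith [norm_nonneg ℓ]), one_pow, one_div]

theorem lorentzFactor_pos {ℓ : E} (hℓ : ‖ℓ‖ < 1) : 0 < lorentzFactor ℓ := by
  have : 0 < 1 - ‖ℓ‖ ^ 2 := by nlinarith [norm_nonneg ℓ]
  unfold lorentzFactor; positivity

variable [InnerProductSpace ℝ E] [FiniteDimensional ℝ E]

/-- The spatial part of the Lorentz boost of velocity `ℓ`: it is the identity on `ℓ^⊥` and
dilates `ℝ ℓ` by the Lorentz factor. -/
noncomputable def lorentzBoost (ℓ : E) : E →L[ℝ] E :=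
  LinearMap.toContinuousLinearMap <|
    LinearMap.transvection (innerₛₗ ℝ ((1 / ‖ℓ‖ ^ 2 * (lorentzFactor ℓ - 1)) • ℓ)) ℓ

theorem lorentzBoost_apply (ℓ x : E) :
    lorentzBoost ℓ x = x + (1 / ‖ℓ‖ ^ 2 * (lorentzFactor ℓ - 1) * ⟪ℓ, x⟫) • ℓ := by
  simp [lorentzBoost, LinearMap.transvection.apply]

theorem det_lorentzBoost (ℓ : E) : (lorentzBoost ℓ).det = lorentzFactor ℓ := by
  simp only [lorentzBoost, LinearMap.det_toContinuousLinearMap, LinearMap.transvection.det,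
    innerₛₗ_apply_apply, real_inner_smul_left, real_inner_self_eq_norm_sq]
  rcases eq_or_ne ℓ 0 with rfl | hℓ
  · simp [lorentzFactor]
  · field_simp
    ring

theorem inner_lorentzBoost_left (ℓ x y : E) : ⟪lorentzBoost ℓ x, y⟫ = ⟪x, lorentzBoost ℓ y⟫ := by
  simp only [lorentzBoost_apply, inner_add_left, inner_add_right, real_inner_smul_left,
    real_inner_smul_right, real_inner_comm ℓ]
  ring

theorem norm_lorentzBoost_sq {ℓ : E} (hℓ : ‖ℓ‖ < 1) (y : E) :
    ‖lorentzBoost ℓ y‖ ^ 2 = ‖y‖ ^ 2 + lorentzFactor ℓ ^ 2 * ⟪ℓ, y⟫ ^ 2 := by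
  rcases eq_or_ne ℓ 0 with rfl | hℓ0
  · simp [lorentzBoost_apply]
  have hγ : lorentzFactor ℓ ^ 2 * (1 - ‖ℓ‖ ^ 2) = 1 := by
    rw [lorentzFactor_sq hℓ, inv_mul_cancel₀ (by nlinarith [norm_nonneg ℓ])]
  have hr : ‖ℓ‖ ≠ 0 := norm_ne_zero_iff.2 hℓ0
  rw [lorentzBoost_apply, norm_add_sq_real, norm_smul, real_inner_smul_right, mul_pow,
    Real.norm_eq_abs, sq_abs, real_inner_comm ℓ y]
  field_simp
  linear_combination ⟪ℓ, y⟫ ^ 2 * hγ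

end LorentzBoost

section Bubble
variable {E : Type*} [NormedAddCommGroup E] [InnerProductSpace ℝ E]

theorem hasFDerivAt_one_add_norm_sq_div_rpow {c : ℝ} (hc : 0 ≤ c) (p : ℝ) (x : E) :
    HasFDerivAt (fun y : E => (1 + ‖y‖ ^ 2 / c) ^ p)
      ((p * (1 + ‖x‖ ^ 2 / c) ^ (p - 1) * (2 / c)) • innerSL ℝ x) x := by
  have hg : HasFDerivAt (fun y : E => 1 + ‖y‖ ^ 2 / c) ((2 / c) • innerSL ℝ x) x := by
    have := ((hasStrictFDerivAt_norm_sq x).hasFDerivAt.mul_const c⁻¹).const_add 1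
    rw [smul_comm, two_smul, ← add_smul, ← two_mul] at this
    simpa only [div_eq_mul_inv] using this
  convert hg.rpow_const (p := p) (Or.inl (by positivity)) using 1
  rw [smul_smul]

variable [FiniteDimensional ℝ E] [MeasurableSpace E] [BorelSpace E]

theorem integrable_one_add_norm_sq_div_rpow_mul_norm_sq (μ : Measure E) [μ.IsAddHaarMeasure]
    {c q : ℝ} (hc : 0 < c) (hq : finrank ℝ E < -2 * (q + 1)) :
    Integrable (fun x : E => (1 + ‖x‖ ^ 2 / c) ^ q * ‖x‖ ^ 2) μ := by
  have hdom : Integrable (fun x : E => c * (1 + ‖(√c)⁻¹ • x‖ ^ 2) ^ (-(-2 * (q + 1)) / 2)) μ :=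
    ((integrable_rpow_neg_one_add_norm_sq hq).comp_smul (by positivity)).const_mul c
  refine hdom.mono' (by fun_prop) (ae_of_all _ fun x => ?_)
  have hnorm : ‖(√c)⁻¹ • x‖ ^ 2 = ‖x‖ ^ 2 / c := by
    rw [norm_smul, mul_pow, norm_inv, Real.norm_eq_abs, abs_of_pos (by positivity), inv_pow,
      Real.sq_sqrt hc.le, inv_mul_eq_div]
  have hg : 0 < 1 + ‖x‖ ^ 2 / c := by positivity
  rw [hnorm, Real.norm_eq_abs, abs_of_nonneg (by positivity),
    show -(-2 * (q + 1)) / 2 = q + 1 by ring, Real.rpow_add_one hg.ne']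
  have : ‖x‖ ^ 2 ≤ c * (1 + ‖x‖ ^ 2 / c) := by rw [mul_add, mul_div_cancel₀ _ hc.ne']; linarith
  calc (1 + ‖x‖ ^ 2 / c) ^ q * ‖x‖ ^ 2 ≤ (1 + ‖x‖ ^ 2 / c) ^ q * (c * (1 + ‖x‖ ^ 2 / c)) := by
        gcongr
    _ = _ := by ring

end Bubble

section GroundState
variable {N : ℕ}

theorem natCast_mul_sub_two_pos (hN : 3 ≤ N) : (0 : ℝ) < N * (N - 2) := by
  have : (3 : ℝ) ≤ N := by exact_mod_cast hN
  nlinarith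

theorem one_add_norm_sq_div_mul_sub_two_pos (hN : 3 ≤ N) (x : EuclideanSpace ℝ (Fin N)) :
    0 < 1 + ‖x‖ ^ 2 / (N * (N - 2)) :=
  add_pos_of_pos_of_nonneg one_pos (div_nonneg (sq_nonneg _) (natCast_mul_sub_two_pos hN).le)

noncomputable def groundStateGradFactor (N : ℕ) (x : EuclideanSpace ℝ (Fin N)) : ℝ :=
  -(N : ℝ)⁻¹ * (1 + ‖x‖ ^ 2 / (N * (N - 2))) ^ (-(N : ℝ) / 2)

theorem hasFDerivAt_groundStateW (hN : 3 ≤ N) (x : EuclideanSpace ℝ (Fin N)) :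
    HasFDerivAt (groundStateW N) (groundStateGradFactor N x • innerSL ℝ x) x := by
  have hc := natCast_mul_sub_two_pos hN
  refine (hasFDerivAt_one_add_norm_sq_div_rpow hc.le (1 - N / 2) x).congr_fderiv ?_
  have h2 : (N : ℝ) - 2 ≠ 0 := right_ne_zero_of_mul hc.ne'
  rw [groundStateGradFactor, show (1 : ℝ) - N / 2 - 1 = -N / 2 by ring]
  congr 1
  field_simp
  ring

theorem groundStateGradFactor_sq (hN : 3 ≤ N) (x : EuclideanSpace ℝ (Fin N)) :
    groundStateGradFactor N x ^ 2
      = ((N : ℝ) ^ 2)⁻¹ * (1 + ‖x‖ ^ 2 / (N * (N - 2))) ^ (-(N : ℝ)) := by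
  rw [groundStateGradFactor, mul_pow, neg_sq, inv_pow,
    ← Real.rpow_mul_natCast (one_add_norm_sq_div_mul_sub_two_pos hN x).le]
  norm_num

theorem continuous_groundStateGradFactor (hN : 3 ≤ N) : Continuous (groundStateGradFactor N) :=
  continuous_const.mul <| (continuous_const.add ((continuous_norm.pow 2).div_const _)).rpow_const
    fun x => Or.inl (one_add_norm_sq_div_mul_sub_two_pos hN x).ne'

theorem integrable_groundStateGradFactor_sq_mul_norm_sq (hN : 3 ≤ N) :
    Integrable fun x : EuclideanSpace ℝ (Fin N) => groundStateGradFactor N x ^ 2 * ‖x‖ ^ 2 := by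
  have : (3 : ℝ) ≤ N := by exact_mod_cast hN
  simp_rw [groundStateGradFactor_sq hN, mul_assoc]
  exact (integrable_one_add_norm_sq_div_rpow_mul_norm_sq volume (natCast_mul_sub_two_pos hN)
    (by rw [finrank_euclideanSpace_fin]; linarith)).const_mul _

theorem norm_fderiv_groundStateW_sq (hN : 3 ≤ N) (x : EuclideanSpace ℝ (Fin N)) :
    ‖fderiv ℝ (groundStateW N) x‖ ^ 2 = groundStateGradFactor N x ^ 2 * ‖x‖ ^ 2 := by
  rw [(hasFDerivAt_groundStateW hN x).fderiv, norm_smul, innerSL_apply_norm, mul_pow,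
    Real.norm_eq_abs, sq_abs]

theorem integral_norm_fderiv_groundStateW_sq_pos (hN : 3 ≤ N) :
    0 < ∫ x, ‖fderiv ℝ (groundStateW N) x‖ ^ 2 := by
  have : NeZero N := ⟨by omega⟩
  simp_rw [norm_fderiv_groundStateW_sq hN]
  refine integral_pos_of_integrable_nonneg_nonzero (x := EuclideanSpace.single 0 1)
    (((continuous_groundStateGradFactor hN).pow 2).mul (continuous_norm.pow 2))
    (integrable_groundStateGradFactor_sq_mul_norm_sq hN) (fun x => by positivity) ?_
  rw [PiLp.norm_single, norm_one, one_pow, mul_one, groundStateGradFactor]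
  exact pow_ne_zero _ <| mul_ne_zero (by simp; omega)
    (Real.rpow_pos_of_pos (one_add_norm_sq_div_mul_sub_two_pos hN _) _).ne'

end GroundState

section TravelingWave
variable {N : ℕ}

theorem travelingW_eq (ℓ : EuclideanSpace ℝ (Fin N)) (t : ℝ) (x : EuclideanSpace ℝ (Fin N)) :
    travelingW N ℓ t x = groundStateW N (lorentzBoost ℓ x + (-t * lorentzFactor ℓ) • ℓ) := by
  rw [travelingW, lorentzBoost_apply, lorentzFactor, mul_one_div, add_smul]
  abel_nf

theorem hasFDerivAt_travelingW_zero (hN : 3 ≤ N) (ℓ x : EuclideanSpace ℝ (Fin N)) :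
    HasFDerivAt (travelingW N ℓ 0)
      (groundStateGradFactor N (lorentzBoost ℓ x) • innerSL ℝ (lorentzBoost ℓ (lorentzBoost ℓ x)))
      x := by
  have h := (hasFDerivAt_groundStateW hN (lorentzBoost ℓ x)).comp x (lorentzBoost ℓ).hasFDerivAt
  have hfun : travelingW N ℓ 0 = groundStateW N ∘ lorentzBoost ℓ := by
    ext y; simp [travelingW_eq]
  rw [hfun]
  refine h.congr_fderiv ?_
  ext y
  simp [inner_lorentzBoost_left]

theorem hasDerivAt_travelingW_time (hN : 3 ≤ N) (ℓ x : EuclideanSpace ℝ (Fin N)) :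
    HasDerivAt (fun t => travelingW N ℓ t x)
      (-(groundStateGradFactor N (lorentzBoost ℓ x) * lorentzFactor ℓ * ⟪lorentzBoost ℓ x, ℓ⟫))
      0 := by
  have hpath : HasDerivAt (fun t : ℝ => lorentzBoost ℓ x + (-t * lorentzFactor ℓ) • ℓ)
      ((-lorentzFactor ℓ) • ℓ) 0 := by
    simpa using (((hasDerivAt_id (0 : ℝ)).neg.mul_const (lorentzFactor ℓ)).smul_const ℓ).const_add
      (lorentzBoost ℓ x)
  have h := (hasFDerivAt_groundStateW hN (lorentzBoost ℓ x)).comp_hasDerivAt_of_eq 0 hpath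
    (by simp)
  simp_rw [travelingW_eq]
  refine h.congr_deriv ?_
  simp only [smul_apply, innerSL_apply_apply, real_inner_smul_right,
    smul_eq_mul]
  ring

theorem energyDensity_travelingW (hN : 3 ≤ N) {ℓ : EuclideanSpace ℝ (Fin N)} (hℓ : ‖ℓ‖ < 1)
    (x : EuclideanSpace ℝ (Fin N)) :
    ‖fderiv ℝ (travelingW N ℓ 0) x‖ ^ 2 + deriv (fun t => travelingW N ℓ t x) 0 ^ 2
      = groundStateGradFactor N (lorentzBoost ℓ x) ^ 2
          * (‖lorentzBoost ℓ x‖ ^ 2 + 2 * lorentzFactor ℓ ^ 2 * ⟪ℓ, lorentzBoost ℓ x⟫ ^ 2) := by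
  rw [(hasFDerivAt_travelingW_zero hN ℓ x).fderiv, (hasDerivAt_travelingW_time hN ℓ x).deriv,
    norm_smul, innerSL_apply_norm, mul_pow, norm_lorentzBoost_sq hℓ, Real.norm_eq_abs, sq_abs,
    real_inner_comm ℓ]
  ring

theorem travelingWHnormSq_eq_integral (hN : 3 ≤ N) {ℓ : EuclideanSpace ℝ (Fin N)} (hℓ : ‖ℓ‖ < 1) :
    travelingWHnormSq N ℓ = (lorentzFactor ℓ)⁻¹ * ∫ y, groundStateGradFactor N y ^ 2
      * (‖y‖ ^ 2 + 2 * lorentzFactor ℓ ^ 2 * ⟪ℓ, y⟫ ^ 2) := by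
  have hγ : 0 < lorentzFactor ℓ := lorentzFactor_pos hℓ
  simp_rw [travelingWHnormSq, energyDensity_travelingW hN hℓ]
  rw [integral_comp_continuousLinearMap_of_det_ne_zero volume
      (by rw [det_lorentzBoost]; exact hγ.ne')
      (fun y => groundStateGradFactor N y ^ 2
        * (‖y‖ ^ 2 + 2 * lorentzFactor ℓ ^ 2 * ⟪ℓ, y⟫ ^ 2)),
    det_lorentzBoost, abs_of_pos hγ, smul_eq_mul]

theorem integral_groundStateGradFactor_sq_mul_inner_sq (hN : 3 ≤ N)
    (e : EuclideanSpace ℝ (Fin N)) :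
    N * ∫ y, groundStateGradFactor N y ^ 2 * ⟪e, y⟫ ^ 2
      = ‖e‖ ^ 2 * ∫ x, ‖fderiv ℝ (groundStateW N) x‖ ^ 2 := by
  simpa [norm_fderiv_groundStateW_sq hN] using finrank_mul_integral_mul_inner_sq
    (f := fun y => groundStateGradFactor N y ^ 2)
    (fun x y hxy => by simp only [groundStateGradFactor, hxy])
    ((continuous_groundStateGradFactor hN).pow 2).aestronglyMeasurable
    (integrable_groundStateGradFactor_sq_mul_norm_sq hN) e

theorem travelingWHnormSq_eq (hN : 3 ≤ N) {ℓ : EuclideanSpace ℝ (Fin N)} (hℓ : ‖ℓ‖ < 1) :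
    travelingWHnormSq N ℓ
      = ((N + (2 - (N : ℝ)) * ‖ℓ‖ ^ 2) / (N * √(1 - ‖ℓ‖ ^ 2)))
          * ∫ x, ‖fderiv ℝ (groundStateW N) x‖ ^ 2 := by
  have hint := integrable_groundStateGradFactor_sq_mul_norm_sq hN
  have hρ : AEStronglyMeasurable fun y => groundStateGradFactor N y ^ 2 :=
    ((continuous_groundStateGradFactor hN).pow 2).aestronglyMeasurable
  have hsplit : ∫ y, groundStateGradFactor N y ^ 2
        * (‖y‖ ^ 2 + 2 * lorentzFactor ℓ ^ 2 * ⟪ℓ, y⟫ ^ 2)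
      = (∫ x, ‖fderiv ℝ (groundStateW N) x‖ ^ 2)
        + 2 * lorentzFactor ℓ ^ 2 * ∫ y, groundStateGradFactor N y ^ 2 * ⟪ℓ, y⟫ ^ 2 := by
    simp_rw [norm_fderiv_groundStateW_sq hN, ← integral_const_mul]
    rw [← integral_add hint ((hint.mul_inner_sq hρ ℓ).const_mul _)]
    congr 1 with y
    ring
  have hs : √(1 - ‖ℓ‖ ^ 2) ^ 2 = 1 - ‖ℓ‖ ^ 2 := Real.sq_sqrt (by nlinarith [norm_nonneg ℓ])
  have hs0 : 0 < √(1 - ‖ℓ‖ ^ 2) := Real.sqrt_pos.2 (by nlinarith [norm_nonneg ℓ])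
  have hN0 : (N : ℝ) ≠ 0 := by norm_cast; omega
  rw [travelingWHnormSq_eq_integral hN hℓ, hsplit, lorentzFactor]
  field_simp
  linear_combination 2 * integral_groundStateGradFactor_sq_mul_inner_sq hN ℓ
    + N * (∫ x, ‖fderiv ℝ (groundStateW N) x‖ ^ 2) * hs

end TravelingWave

theorem tendsto_div_mul_sqrt_one_sub_sq_nhdsLT_one {n : ℝ} (hn : 0 < n) :
    Tendsto (fun r : ℝ => (n + (2 - n) * r ^ 2) / (n * √(1 - r ^ 2))) (𝓝[<] 1) atTop := by
  have hnum : Tendsto (fun r : ℝ => (n + (2 - n) * r ^ 2) / n) (𝓝[<] 1) (𝓝 (2 / n)) :=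
    ((by fun_prop : Continuous fun r : ℝ => (n + (2 - n) * r ^ 2) / n).tendsto' 1 _
      (by ring)).mono_left nhdsWithin_le_nhds
  have hsqrt : Tendsto (fun r : ℝ => √(1 - r ^ 2)) (𝓝[<] 1) (𝓝[>] 0) := by
    refine tendsto_nhdsWithin_iff.2 ⟨((by fun_prop : Continuous fun r : ℝ => √(1 - r ^ 2)).tendsto'
      1 0 (by simp)).mono_left nhdsWithin_le_nhds, ?_⟩
    filter_upwards [Ioo_mem_nhdsLT zero_lt_one] with r hr
    exact Real.sqrt_pos.2 (by nlinarith [hr.1, hr.2])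
  refine (hnum.pos_mul_atTop (by positivity) (tendsto_inv_nhdsGT_zero.comp hsqrt)).congr
    fun r => ?_
  simp only [Function.comp_apply]
  ring

/-- `‖(W_ℓ(0), ∂_t W_ℓ(0))‖²_𝓗 = ((N + (2-N)|ℓ|²)/(N√(1-|ℓ|²))) ‖W‖²_{Ḣ¹}`; in
particular this quantity tends to `+∞` as `|ℓ| → 1`. -/
theorem travelingW_Hnorm_sq (N : ℕ) (hN : 3 ≤ N) :
    (∀ ℓ : EuclideanSpace ℝ (Fin N), ‖ℓ‖ < 1 →
      travelingWHnormSq N ℓ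
        = ((N + (2 - (N : ℝ)) * ‖ℓ‖ ^ 2) / (N * Real.sqrt (1 - ‖ℓ‖ ^ 2)))
          * ∫ x : EuclideanSpace ℝ (Fin N), ‖fderiv ℝ (groundStateW N) x‖ ^ 2)
    ∧ Tendsto (travelingWHnormSq N)
        (Filter.comap (fun ℓ : EuclideanSpace ℝ (Fin N) => ‖ℓ‖) (𝓝[<] 1))
        atTop := by
  refine ⟨fun ℓ hℓ => travelingWHnormSq_eq hN hℓ, Tendsto.congr' ?_ <|
    ((tendsto_div_mul_sqrt_one_sub_sq_nhdsLT_one (n := N) (by positivity)).atTop_mul_const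
      (integral_norm_fderiv_groundStateW_sq_pos hN)).comp tendsto_comap⟩
  filter_upwards [preimage_mem_comap self_mem_nhdsWithin] with ℓ hℓ
  exact (travelingWHnormSq_eq hN hℓ).symm
end

section
/- Let N = 5 and F(u) = |u|^{4/3}u on ℝ. There exists C > 0 such that for all real u, v, W with h = u - v: |F(u) - F(v) - F'(W)h| ≤ C |h| (|v - W|^{4/3} + |W|^{1/3}|v - W| + |W|^{1/3}|h| + |h|^{4/3}), where F'(W) = (7/3)|W|^{4/3}. -/
/-!
For `F(x) = |x|^p x` with `1 < p ≤ 2` (here `p = 4/3`), `F'(x) = (p+1)|x|^p`. By the mean value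
theorem and the subadditivity of `t ↦ t^(p-1)`,
`||a|^p - |b|^p| ≤ p (|a-b|^p + |b|^(p-1) |a-b|)`. Applying the mean value theorem once more to
`x ↦ F(x) - F'(W) x` on the segment between `v` and `u`, whose derivative is `F'(x) - F'(W)`, and
using `|x - W| ≤ |v - W| + |u - v|` there, gives the estimate.
-/

open Set

namespace Real

lemma rpow_add_le_mul_rpow_add_rpow {a b p : ℝ} (ha : 0 ≤ a) (hb : 0 ≤ b) (hp : 1 ≤ p) :
    (a + b) ^ p ≤ 2 ^ (p - 1) * (a ^ p + b ^ p) := by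
  lift a to NNReal using ha
  lift b to NNReal using hb
  exact_mod_cast NNReal.rpow_add_le_mul_rpow_add_rpow a b hp

end Real

section

variable {p : ℝ}

lemma abs_rpow_sub_one_mul_abs (hp : p ≠ 0) (x : ℝ) : |x| ^ (p - 1) * |x| = |x| ^ p := by
  rw [← Real.rpow_add_one' (abs_nonneg x) (by simpa using hp), sub_add_cancel]

lemma hasDerivAt_abs_rpow_mul_self (hp : 1 < p) (x : ℝ) :
    HasDerivAt (fun y : ℝ => |y| ^ p * y) ((p + 1) * |x| ^ p) x := by
  refine ((hasDerivAt_abs_rpow x hp).mul (hasDerivAt_id x)).congr_deriv ?_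
  have hsq : |x| ^ (p - 2) * |x| ^ 2 = |x| ^ p := by
    rw [← Real.rpow_add_natCast' (abs_nonneg x) (by push_cast; linarith)]
    norm_num
  rw [id, mul_assoc, mul_assoc, ← sq, ← sq_abs, hsq]
  ring

lemma abs_abs_rpow_sub_abs_rpow_le (hp : 1 < p) (hp2 : p ≤ 2) (a b : ℝ) :
    |(|a| ^ p - |b| ^ p)| ≤ p * (|a - b| ^ p + |b| ^ (p - 1) * |a - b|) := by
  have hderiv : ∀ t ∈ uIcc b a, HasDerivWithinAt (fun x : ℝ => |x| ^ p)
      (p * |t| ^ (p - 2) * t) (uIcc b a) t :=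
    fun t _ => (hasDerivAt_abs_rpow t hp).hasDerivWithinAt
  have hbound : ∀ t ∈ uIcc b a,
      ‖p * |t| ^ (p - 2) * t‖ ≤ p * (|b| ^ (p - 1) + |a - b| ^ (p - 1)) := by
    intro t ht
    have hnorm : ‖p * |t| ^ (p - 2) * t‖ = p * |t| ^ (p - 1) := by
      rw [Real.norm_eq_abs, abs_mul, abs_mul, abs_of_pos (by linarith : 0 < p),
        abs_of_nonneg (by positivity), mul_assoc,
        ← Real.rpow_add_one' (abs_nonneg t) (by linarith)]
      ring_nf
    have htb : |t| ≤ |b| + |a - b| := by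
      calc |t| ≤ |b| + |t - b| := by simpa using abs_add_le b (t - b)
        _ ≤ |b| + |a - b| := add_le_add_right (abs_sub_left_of_mem_uIcc ht) _
    rw [hnorm]
    gcongr
    calc |t| ^ (p - 1) ≤ (|b| + |a - b|) ^ (p - 1) := by gcongr
      _ ≤ |b| ^ (p - 1) + |a - b| ^ (p - 1) :=
        Real.rpow_add_le_add_rpow (abs_nonneg _) (abs_nonneg _) (by linarith) (by linarith)
  have hmvt := (convex_uIcc b a).norm_image_sub_le_of_norm_hasDerivWithin_le hderiv hbound
    left_mem_uIcc right_mem_uIcc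
  simp only [Real.norm_eq_abs] at hmvt
  rw [← abs_rpow_sub_one_mul_abs (by linarith : p ≠ 0) (a - b)]
  linarith

lemma abs_rpow_mul_sub_rpow_mul_sub_le (hp : 1 < p) (hp2 : p ≤ 2) (u v W : ℝ) :
    |(|u| ^ p * u - |v| ^ p * v - (p + 1) * |W| ^ p * (u - v))|
      ≤ 2 ^ (p - 1) * p * (p + 1) * |u - v| *
          (|v - W| ^ p + |W| ^ (p - 1) * |v - W| + |W| ^ (p - 1) * |u - v| + |u - v| ^ p) := by
  set A := |v - W|
  set B := |u - v|
  have hderiv : ∀ t ∈ uIcc v u,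
      HasDerivWithinAt (fun x : ℝ => |x| ^ p * x - (p + 1) * |W| ^ p * x)
        ((p + 1) * (|t| ^ p - |W| ^ p)) (uIcc v u) t := fun t _ =>
    ((hasDerivAt_abs_rpow_mul_self hp t).sub ((hasDerivAt_id t).const_mul _)).hasDerivWithinAt
      |>.congr_deriv (by ring)
  have hbound : ∀ t ∈ uIcc v u, ‖(p + 1) * (|t| ^ p - |W| ^ p)‖
      ≤ 2 ^ (p - 1) * p * (p + 1) * (A ^ p + |W| ^ (p - 1) * A + |W| ^ (p - 1) * B + B ^ p) := by
    intro t ht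
    have htW : |t - W| ≤ A + B := by
      calc |t - W| ≤ |t - v| + |v - W| := abs_sub_le t v W
        _ ≤ A + B := by linarith [abs_sub_left_of_mem_uIcc ht]
    have h2 : 1 ≤ (2 : ℝ) ^ (p - 1) := Real.one_le_rpow (by norm_num) (by linarith)
    have hW : 0 ≤ |W| ^ (p - 1) * (A + B) := by positivity
    calc ‖(p + 1) * (|t| ^ p - |W| ^ p)‖ = (p + 1) * |(|t| ^ p - |W| ^ p)| := by
          rw [Real.norm_eq_abs, abs_mul, abs_of_pos (by linarith : 0 < p + 1)]
      _ ≤ (p + 1) * (p * (|t - W| ^ p + |W| ^ (p - 1) * |t - W|)) := by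
          gcongr; exact abs_abs_rpow_sub_abs_rpow_le hp hp2 t W
      _ ≤ (p + 1) * (p * ((A + B) ^ p + |W| ^ (p - 1) * (A + B))) := by gcongr
      _ ≤ (p + 1) * (p * (2 ^ (p - 1) * (A ^ p + B ^ p)
            + 2 ^ (p - 1) * (|W| ^ (p - 1) * (A + B)))) := by
          gcongr ?_ * (?_ * (?_ + ?_))
          · exact Real.rpow_add_le_mul_rpow_add_rpow (abs_nonneg _) (abs_nonneg _) hp.le
          · exact le_mul_of_one_le_left hW h2
      _ = _ := by ring
  have hmvt := (convex_uIcc v u).norm_image_sub_le_of_norm_hasDerivWithin_le hderiv hbound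
    left_mem_uIcc right_mem_uIcc
  simp only [Real.norm_eq_abs] at hmvt
  convert hmvt using 1
  · congr 1; ring
  · ring

end

/-- Pointwise estimate in dimension `N = 5` for `F(u) = |u|^{4/3} u`: with
`h = u - v` and `F'(W) = (7/3)|W|^{4/3}`,
`|F(u) - F(v) - F'(W)h| ≤ C |h| (|v-W|^{4/3} + |W|^{1/3}|v-W| + |W|^{1/3}|h| + |h|^{4/3})`. -/
theorem quintic_difference_estimate :
    ∃ C > 0, ∀ u v W : ℝ,
      |(|u| ^ ((4 : ℝ) / 3) * u - |v| ^ ((4 : ℝ) / 3) * v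
          - 7 / 3 * |W| ^ ((4 : ℝ) / 3) * (u - v))|
        ≤ C * |u - v| *
            (|v - W| ^ ((4 : ℝ) / 3) + |W| ^ ((1 : ℝ) / 3) * |v - W|
              + |W| ^ ((1 : ℝ) / 3) * |u - v| + |u - v| ^ ((4 : ℝ) / 3)) := by
  refine ⟨2 ^ ((4 : ℝ) / 3 - 1) * (4 / 3) * (4 / 3 + 1), by positivity, fun u v W => ?_⟩
  have h := abs_rpow_mul_sub_rpow_mul_sub_le (p := 4 / 3) (by norm_num) (by norm_num) u v W
  norm_num at h ⊢
  exact h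
end
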